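/- Cocycle lift preserves extreme properties: Let R be a discrete equivalence relation on B, α: R → Γ a Borel cocycle into a group Γ acting on a standard space X, and R^α the relation on B×X given by (b,x) ∼ (b',x') iff (b,b') ∈ R and α(b',b)x = x'. Given a sequence of subset functions F = {F_n} for R, define F^α_n(b,x) = {(b', α(b',b)x) : b' ∈ F_n(b)}. If F is anchored then F^α is anchored; if F satisfies the extreme Besicovich property then so does F^α; if F is extremely asymptotically invariant then so is F^α. -/

import Mathlib

/-!
Every point of the fibre over the `R`-class of `b` has the form `(c, α(c,b)·x)`, and by the
cocycle identity this parametrisation `c ↦ (c, α(c,b)·x)` does not depend on which point `(b,x)`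
of a lifted class is used. Hence `F^α_n(b,x)` is the injective image of `F_n(b)` under one map per
lifted class, which transports anchoring, equality, disjointness and cardinality. A class-preserving
permutation `φ` of `B` lifts to `(b,x) ↦ (φ b, α(φ b, b)·x)`; lifting is a homomorphism on the
group of class-preserving permutations, so lifted generators generate a group acting transitively
on lifted classes, and the same parametrisation turns `φ`-invariance of `F_n(b)` into invariance of
`F^α_n(b,x)` under the lift of `φ`.
-/

open MeasureTheory Filter

variable {B X Γ : Type*}

/-- The lifted equivalence relation `R^α` on `B × X`:
`(b,x) ∼ (b',x')` iff `(b,b') ∈ R` and `α(b',b)·x = x'`. -/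
def RLift [Group Γ] [MulAction Γ X] (R : B → B → Prop) (α : B → B → Γ) :
    B × X → B × X → Prop :=
  fun p q => R p.1 q.1 ∧ α q.1 p.1 • p.2 = q.2

/-- The lifted subset functions `F^α_n(b,x) = {(b', α(b',b)·x) : b' ∈ F_n(b)}`. -/
def FLift [Group Γ] [MulAction Γ X] [DecidableEq B] [DecidableEq X]
    (α : B → B → Γ) (F : ℕ → B → Finset B) : ℕ → B × X → Finset (B × X) :=
  fun n p => (F n p.1).image fun b' => (b', α b' p.1 • p.2)

abbrev IsCocycle [Group Γ] (R : B → B → Prop) (α : B → B → Γ) : Prop :=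
  ∀ b₁ b₂ b₃, R b₁ b₂ → R b₂ b₃ → α b₁ b₂ * α b₂ b₃ = α b₁ b₃

theorem IsCocycle.apply_self [Group Γ] {R : B → B → Prop} {α : B → B → Γ}
    (hα : IsCocycle R α) {b : B} (hb : R b b) : α b b = 1 :=
  mul_eq_left.mp (hα b b b hb hb)

section Fibre

variable [Group Γ] [MulAction Γ X] {R : B → B → Prop} {α : B → B → Γ}

def fiberSection (α : B → B → Γ) (p : B × X) (c : B) : B × X :=
  (c, α c p.1 • p.2)

theorem fiberSection_injective (α : B → B → Γ) (p : B × X) :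
    Function.Injective (fiberSection α p) :=
  fun _ _ h => congrArg Prod.fst h

theorem fiberSection_self (hR : Equivalence R) (hα : IsCocycle R α) (p : B × X) :
    fiberSection α p p.1 = p := by
  simp only [fiberSection, hα.apply_self (hR.refl p.1), one_smul]

theorem fiberSection_of_rLift {p q : B × X} (hpq : RLift R α p q) : fiberSection α p q.1 = q :=
  Prod.ext rfl hpq.2

theorem rLift_fiberSection {p : B × X} {c : B} (hc : R p.1 c) :
    RLift R α p (fiberSection α p c) :=
  ⟨hc, rfl⟩

theorem fiberSection_eq_of_rLift (hR : Equivalence R) (hα : IsCocycle R α) {p q : B × X}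
    (hpq : RLift R α p q) {c : B} (hc : R q.1 c) :
    fiberSection α q c = fiberSection α p c := by
  simp only [fiberSection, ← hpq.2, smul_smul, hα _ _ _ (hR.symm hc) (hR.symm hpq.1)]

variable [DecidableEq B] [DecidableEq X]

theorem fLift_eq_image_fiberSection_self (α : B → B → Γ) (F : ℕ → B → Finset B) (n : ℕ)
    (p : B × X) : FLift α F n p = (F n p.1).image (fiberSection α p) :=
  rfl

theorem fLift_eq_image_fiberSection (hR : Equivalence R) (hα : IsCocycle R α)
    {F : ℕ → B → Finset B} (hsub : ∀ n b, ∀ b' ∈ F n b, R b b') {p q : B × X}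
    (hpq : RLift R α p q) (n : ℕ) :
    FLift α F n q = (F n q.1).image (fiberSection α p) :=
  Finset.image_congr fun c hc => fiberSection_eq_of_rLift hR hα hpq (hsub n q.1 c hc)

theorem card_fLift (α : B → B → Γ) (F : ℕ → B → Finset B) (n : ℕ) (p : B × X) :
    (FLift α F n p).card = (F n p.1).card :=
  Finset.card_image_of_injective _ (fiberSection_injective α p)

theorem self_mem_fLift (hR : Equivalence R) (hα : IsCocycle R α) {F : ℕ → B → Finset B}
    (hF : ∀ n b, b ∈ F n b) (n : ℕ) (p : B × X) : p ∈ FLift α F n p :=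
  Finset.mem_image.mpr ⟨p.1, hF n p.1, fiberSection_self hR hα p⟩

theorem fLift_eq_or_disjoint_of_rLift (hR : Equivalence R) (hα : IsCocycle R α)
    {F : ℕ → B → Finset B} (hsub : ∀ n b, ∀ b' ∈ F n b, R b b') {p q : B × X}
    (hpq : RLift R α p q) {n : ℕ}
    (hF : F n p.1 = F n q.1 ∨ Disjoint (F n p.1 : Set B) (F n q.1 : Set B)) :
    FLift α F n p = FLift α F n q ∨
      Disjoint (FLift α F n p : Set (B × X)) (FLift α F n q : Set (B × X)) := by
  rw [Finset.disjoint_coe, fLift_eq_image_fiberSection hR hα hsub hpq,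
    fLift_eq_image_fiberSection_self, Finset.disjoint_image (fiberSection_injective α p),
    ← Finset.disjoint_coe]
  exact hF.imp_left (congrArg _)

end Fibre

section Lift

variable [Group Γ] [MulAction Γ X] {R : B → B → Prop} {α : B → B → Γ}

def classPreservingPerms (R : B → B → Prop) (hR : Equivalence R) : Subgroup (Equiv.Perm B) where
  carrier := {φ | ∀ b, R b (φ b)}
  one_mem' b := hR.refl b
  mul_mem' hφ hψ b := hR.trans (hψ b) (hφ _)
  inv_mem' {φ} hφ b := hR.symm (by simpa using hφ (φ⁻¹ b))

abbrev cocycleLiftAction (hR : Equivalence R) (hα : IsCocycle R α) :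
    MulAction (classPreservingPerms R hR) (B × X) where
  smul φ q := fiberSection α q (φ.1 q.1)
  one_smul := fiberSection_self hR hα
  mul_smul φ ψ q :=
    (fiberSection_eq_of_rLift hR hα (rLift_fiberSection (ψ.2 q.1)) (φ.2 _)).symm

def cocycleLiftHom (hR : Equivalence R) (hα : IsCocycle R α) :
    classPreservingPerms R hR →* Equiv.Perm (B × X) :=
  letI := cocycleLiftAction (X := X) hR hα
  MulAction.toPermHom _ _

theorem cocycleLiftHom_apply (hR : Equivalence R) (hα : IsCocycle R α)
    (φ : classPreservingPerms R hR) (q : B × X) :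
    cocycleLiftHom hR hα φ q = fiberSection α q (φ.1 q.1) :=
  rfl

theorem rLift_cocycleLiftHom_apply (hR : Equivalence R) (hα : IsCocycle R α)
    (φ : classPreservingPerms R hR) (q : B × X) :
    RLift R α q (cocycleLiftHom hR hα φ q) :=
  rLift_fiberSection (φ.2 q.1)

theorem cocycleLiftHom_fiberSection (hR : Equivalence R) (hα : IsCocycle R α)
    (φ : classPreservingPerms R hR) {p : B × X} {c : B} (hc : R p.1 c) :
    cocycleLiftHom hR hα φ (fiberSection α p c) = fiberSection α p (φ.1 c) :=
  fiberSection_eq_of_rLift hR hα (rLift_fiberSection hc) (φ.2 c)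

theorem exists_mem_closure_cocycleLiftHom (hR : Equivalence R) (hα : IsCocycle R α)
    {Φ : Set (Equiv.Perm B)} (hΦ : ∀ φ ∈ Φ, ∀ b, R b (φ b)) {ψ : Equiv.Perm B}
    (hψ : ψ ∈ Subgroup.closure Φ) :
    ∃ φ : classPreservingPerms R hR, φ.1 = ψ ∧ cocycleLiftHom (X := X) hR hα φ ∈
      Subgroup.closure (cocycleLiftHom hR hα '' (Subtype.val ⁻¹' Φ)) := by
  have hΦ_image : (classPreservingPerms R hR).subtype '' (Subtype.val ⁻¹' Φ) = Φ :=
    Set.image_preimage_eq_of_subset fun φ hφ => ⟨⟨φ, hΦ φ hφ⟩, rfl⟩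
  rw [← hΦ_image, ← MonoidHom.map_closure] at hψ
  obtain ⟨φ, hφ, rfl⟩ := Subgroup.mem_map.mp hψ
  refine ⟨φ, rfl, ?_⟩
  rw [← MonoidHom.map_closure]
  exact Subgroup.mem_map_of_mem _ hφ

variable [DecidableEq B] [DecidableEq X]

theorem image_cocycleLiftHom_fLift (hR : Equivalence R) (hα : IsCocycle R α)
    {F : ℕ → B → Finset B} (hsub : ∀ n b, ∀ b' ∈ F n b, R b b')
    (φ : classPreservingPerms R hR) (n : ℕ) (p : B × X) :
    (FLift α F n p).image (cocycleLiftHom hR hα φ) =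
      ((F n p.1).image φ.1).image (fiberSection α p) := by
  rw [fLift_eq_image_fiberSection_self, Finset.image_image, Finset.image_image]
  exact Finset.image_congr fun c hc => cocycleLiftHom_fiberSection hR hα φ (hsub n p.1 c hc)

end Lift

/-- the cocycle lift preserves the extreme properties: if `F` is anchored,
(resp. satisfies the extreme Besicovich property, resp. is extremely asymptotically
invariant) then so is `F^α` with respect to `R^α`. -/
theorem stmt16 [Group Γ] [MulAction Γ X] [DecidableEq B] [DecidableEq X]
    (R : B → B → Prop) (hR : Equivalence R)
    (α : B → B → Γ)
    (hα : ∀ b₁ b₂ b₃, R b₁ b₂ → R b₂ b₃ → α b₁ b₂ * α b₂ b₃ = α b₁ b₃)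
    (F : ℕ → B → Finset B) (hsub : ∀ n b, ∀ b' ∈ F n b, R b b') :
    -- anchored is preserved
    ((∀ n b, b ∈ F n b) → ∀ n, ∀ p : B × X, p ∈ FLift α F n p) ∧
    -- the extreme Besicovich property is preserved
    ((∀ b b', R b b' →
        (∀ n, F n b = F n b' ∨ Disjoint (F n b : Set B) (F n b' : Set B)) ∧
        ∃ N, ∀ n ≥ N, F n b = F n b') →
      ∀ p q : B × X, RLift R α p q →
        (∀ n, FLift α F n p = FLift α F n q ∨
          Disjoint (FLift α F n p : Set (B × X)) (FLift α F n q : Set (B × X))) ∧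
        ∃ N, ∀ n ≥ N, FLift α F n p = FLift α F n q) ∧
    -- extreme asymptotic invariance is preserved
    (∀ Φ : Set (Equiv.Perm B), Φ.Countable →
      (∀ φ ∈ Φ, ∀ b, R b (φ b)) →
      (∀ x y, R x y → ∃ ψ ∈ Subgroup.closure Φ, ψ x = y) →
      (∀ φ ∈ Φ, ∀ b, ∃ N, ∀ n, N < n → (F n b).image ⇑φ = F n b) →
      (∀ b, Tendsto (fun n => (F n b).card) atTop atTop) →
      ∃ Ψ : Set (Equiv.Perm (B × X)), Ψ.Countable ∧
        (∀ ψ ∈ Ψ, ∀ p : B × X, RLift R α p (ψ p)) ∧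
        (∀ p q : B × X, RLift R α p q → ∃ ψ ∈ Subgroup.closure Ψ, ψ p = q) ∧
        (∀ ψ ∈ Ψ, ∀ p : B × X, ∃ N, ∀ n, N < n → (FLift α F n p).image ⇑ψ = FLift α F n p) ∧
        (∀ p : B × X, Tendsto (fun n => (FLift α F n p).card) atTop atTop)) := by
  refine ⟨fun hF => self_mem_fLift hR hα hF, fun hF p q hpq => ?_,
    fun Φ hΦc hΦR hΦgen hΦinv hcard => ?_⟩
  · obtain ⟨hdich, N, hN⟩ := hF p.1 q.1 hpq.1
    refine ⟨fun n => fLift_eq_or_disjoint_of_rLift hR hα hsub hpq (hdich n), N, fun n hn => ?_⟩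
    rw [fLift_eq_image_fiberSection hR hα hsub hpq, fLift_eq_image_fiberSection_self, hN n hn]
  refine ⟨cocycleLiftHom hR hα '' (Subtype.val ⁻¹' Φ),
    (hΦc.preimage Subtype.val_injective).image _, ?_, ?_, ?_, ?_⟩
  · rintro _ ⟨φ, -, rfl⟩ p
    exact rLift_cocycleLiftHom_apply hR hα φ p
  · intro p q hpq
    obtain ⟨ψ, hψ, hψpq⟩ := hΦgen p.1 q.1 hpq.1
    obtain ⟨φ, rfl, hφ⟩ := exists_mem_closure_cocycleLiftHom (X := X) hR hα hΦR hψ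
    refine ⟨_, hφ, ?_⟩
    rw [cocycleLiftHom_apply, hψpq, fiberSection_of_rLift hpq]
  · rintro _ ⟨φ, hφ, rfl⟩ p
    obtain ⟨N, hN⟩ := hΦinv φ.1 hφ p.1
    exact ⟨N, fun n hn => by rw [image_cocycleLiftHom_fLift hR hα hsub, hN n hn]; rfl⟩
  · intro p
    simpa only [card_fLift] using hcard p.1
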